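/- Let δ₊ ≥ 1, δ₋ ≥ 1 and δ > 0 be real numbers such that 2·(log δ₊)·(log δ₋) < (log δ₊ + log δ₋)·(log δ). Then there exist positive integers l and m such that δ₊^l < δ^{(l+m)/2} and δ₋^m < δ^{(l+m)/2}. -/
import Mathlib


/-- Arithmetic claim of the final Remark: if `δ₊, δ₋ ≥ 1`, `δ > 0` and the harmonic-mean
inequality `2·log δ₊·log δ₋ < (log δ₊ + log δ₋)·log δ` holds, then there are positive integers
`l, m` with `δ₊^l < δ^((l+m)/2)` and `δ₋^m < δ^((l+m)/2)`. -/
theorem exists_exponents_of_harmonic_mean_lt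
    (δp δm δ : ℝ) (hδp : 1 ≤ δp) (hδm : 1 ≤ δm) (hδ : 0 < δ)
    (hharm : 2 * Real.log δp * Real.log δm < (Real.log δp + Real.log δm) * Real.log δ) :
    ∃ l m : ℕ, 0 < l ∧ 0 < m ∧
      δp ^ l < δ ^ (((l : ℝ) + (m : ℝ)) / 2) ∧
      δm ^ m < δ ^ (((l : ℝ) + (m : ℝ)) / 2) := by
  set a := Real.log δp with ha
  set b := Real.log δm with hb
  set c := Real.log δ with hc
  have ha0 : 0 ≤ a := Real.log_nonneg hδp
  have hb0 : 0 ≤ b := Real.log_nonneg hδm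
  have hc0 : 0 < c := by
    rcases lt_or_ge 0 c with h | h
    · exact h
    · nlinarith [mul_nonneg ha0 hb0,
        mul_nonpos_of_nonneg_of_nonpos (add_nonneg ha0 hb0) h]
  obtain ⟨l, m, hl, hm, h1, h2⟩ :
      ∃ l m : ℕ, 0 < l ∧ 0 < m ∧
        (2*a - c) * (l:ℝ) < c * (m:ℝ) ∧ (2*b - c) * (m:ℝ) < c * (l:ℝ) := by
    rcases le_or_gt (2*a - c) 0 with hu | hu
    · rcases le_or_gt (2*b - c) 0 with hv | hv
      · exact ⟨1, 1, one_pos, one_pos, by push_cast; nlinarith, by push_cast; nlinarith⟩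
      · obtain ⟨n, hn⟩ := exists_nat_gt ((2*b - c)/c)
        have hn0 : 0 < n := by
          have : (0:ℝ) < n := lt_trans (div_pos hv hc0) hn
          exact_mod_cast this
        refine ⟨n, 1, hn0, one_pos, ?_, ?_⟩
        · have h1 : (2*a - c) * (n:ℝ) ≤ 0 :=
            mul_nonpos_of_nonpos_of_nonneg hu (by positivity)
          push_cast
          nlinarith
        · have := (div_lt_iff₀ hc0).mp hn
          push_cast
          nlinarith
    · rcases le_or_gt (2*b - c) 0 with hv | hv
      · obtain ⟨n, hn⟩ := exists_nat_gt ((2*a - c)/c)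
        have hn0 : 0 < n := by
          have : (0:ℝ) < n := lt_trans (div_pos hu hc0) hn
          exact_mod_cast this
        refine ⟨1, n, one_pos, hn0, ?_, ?_⟩
        · have := (div_lt_iff₀ hc0).mp hn
          push_cast
          nlinarith
        · have h2 : (2*b - c) * (n:ℝ) ≤ 0 :=
            mul_nonpos_of_nonpos_of_nonneg hv (by positivity)
          push_cast
          nlinarith
      · have huv : (2*a - c) * (2*b - c) < c * c := by nlinarith
        have hdiv : (2*a - c)/c < c/(2*b - c) := (div_lt_div_iff₀ hc0 hv).mpr huv
        obtain ⟨q, hq1, hq2⟩ := exists_rat_btwn hdiv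
        have hq0 : 0 < q := by
          have : (0:ℝ) < (q:ℝ) := lt_trans (div_pos hu hc0) hq1
          exact_mod_cast this
        have hnum : 0 < q.num := Rat.num_pos.mpr hq0
        have hden : 0 < (q.den : ℝ) := by exact_mod_cast q.pos
        refine ⟨q.den, q.num.toNat, q.pos, ?_, ?_, ?_⟩
        · omega
        · have hcast : ((q.num.toNat : ℕ) : ℝ) = ((q.num : ℤ) : ℝ) := by
            exact_mod_cast Int.toNat_of_nonneg hnum.le
          have hq : (q:ℝ) = (q.num : ℝ) / (q.den : ℝ) := by
            rw [Rat.cast_def]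
          rw [hcast]
          have := (div_lt_div_iff₀ hc0 hden).mp (by rw [← hq]; exact hq1)
          linarith
        · have hcast : ((q.num.toNat : ℕ) : ℝ) = ((q.num : ℤ) : ℝ) := by
            exact_mod_cast Int.toNat_of_nonneg hnum.le
          have hq : (q:ℝ) = (q.num : ℝ) / (q.den : ℝ) := by
            rw [Rat.cast_def]
          rw [hcast]
          have := (div_lt_div_iff₀ hden hv).mp (by rw [← hq]; exact hq2)
          linarith
  have hδp0 : 0 < δp := lt_of_lt_of_le one_pos hδp
  have hδm0 : 0 < δm := lt_of_lt_of_le one_pos hδm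
  refine ⟨l, m, hl, hm, ?_, ?_⟩
  · have e1 : δp ^ l = Real.exp ((l:ℝ) * a) := by
      rw [ha, ← Real.log_pow, Real.exp_log (pow_pos hδp0 l)]
    have e2 : δ ^ (((l:ℝ) + (m:ℝ)) / 2) = Real.exp (c * (((l:ℝ) + (m:ℝ)) / 2)) := by
      rw [hc, Real.rpow_def_of_pos hδ]
    rw [e1, e2]
    exact Real.exp_lt_exp.mpr (by nlinarith)
  · have e1 : δm ^ m = Real.exp ((m:ℝ) * b) := by
      rw [hb, ← Real.log_pow, Real.exp_log (pow_pos hδm0 m)]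
    have e2 : δ ^ (((l:ℝ) + (m:ℝ)) / 2) = Real.exp (c * (((l:ℝ) + (m:ℝ)) / 2)) := by
      rw [hc, Real.rpow_def_of_pos hδ]
    rw [e1, e2]
    exact Real.exp_lt_exp.mpr (by nlinarith)
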